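/- A lattice L is geometric (finite, semimodular, and every element is a join of atoms) if and only if L is isomorphic to the lattice of flats of some matroid; moreover, among simple matroids, this matroid is unique up to isomorphism. -/

import Mathlib

open Finset

/-- A finite matroid on ground set `E`, presented by its rank function. -/
structure FinMatroid (E : Type) [DecidableEq E] [Fintype E] where
  rk : Finset E → ℕ
  rk_le_card : ∀ X, rk X ≤ X.card
  rk_mono : ∀ ⦃X Y : Finset E⦄, X ⊆ Y → rk X ≤ rk Y
  rk_submod : ∀ X Y, rk (X ∪ Y) + rk (X ∩ Y) ≤ rk X + rk Y

namespace FinMatroid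

variable {E α β γ : Type} [DecidableEq E] [Fintype E]

/-- A set is independent iff its rank equals its cardinality. -/
def Indep (M : FinMatroid E) (X : Finset E) : Prop := M.rk X = X.card

/-- The closure of a set: all elements whose insertion does not raise the rank. -/
def closure (M : FinMatroid E) (X : Finset E) : Finset E :=
  univ.filter fun e => M.rk (insert e X) = M.rk X

/-- A flat is a closed set. -/
def IsFlat (M : FinMatroid E) (X : Finset E) : Prop := M.closure X = X

instance (M : FinMatroid E) (X : Finset E) : Decidable (M.IsFlat X) :=
  decidable_of_iff (M.closure X = X) Iff.rfl

/-- The rank of the matroid. -/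
def rank (M : FinMatroid E) : ℕ := M.rk univ

/-- The image of a finite set under a map into `E(N) ∪ {o}`; the zero element `o`
is modelled by `none` and contributes nothing to the image. -/
def optImage [DecidableEq β] (τ : α → Option β) (X : Finset α) : Finset β :=
  X.biUnion fun a => (τ a).toFinset

variable [DecidableEq α] [Fintype α] [DecidableEq β] [Fintype β]

/-- `τ : E(M) ∪ o → E(N) ∪ o` (with `o ↦ o`) is a weak map iff the rank of the image of any
set is at most the rank of the set. -/
def IsWeakMap (M : FinMatroid α) (N : FinMatroid β) (τ : α → Option β) : Prop :=
  ∀ X : Finset α, N.rk (optImage τ X) ≤ M.rk X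

/-- `τ` is surjective if every (nonzero) element of `E(N)` is in the image. -/
def IsSurjMap (τ : α → Option β) : Prop := ∀ b : β, ∃ a : α, τ a = some b

/-- Preimage of `Y ∪ {o}` under `τ`, intersected with `E(M)`. -/
def optPreimage (τ : α → Option β) (Y : Finset β) : Finset α :=
  univ.filter fun a => ∀ b, τ a = some b → b ∈ Y

/-- A strong map: preimages of flats are flats. -/
def IsStrongMap (M : FinMatroid α) (N : FinMatroid β) (τ : α → Option β) : Prop :=
  ∀ Y : Finset β, N.IsFlat Y → M.IsFlat (optPreimage τ Y)

/-- The induced map `τ^#` on flats, `X ↦ cl_N(τ(X))`. -/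
def hmap (N : FinMatroid β) (τ : α → Option β) (X : Finset α) : Finset β :=
  N.closure (optImage τ X)

/-- The Möbius function `μ(0̂, X)` of the lattice of flats of `M`, where `0̂ = cl(∅)`. -/
def mu (M : FinMatroid E) (X : Finset E) : ℤ :=
  if X = M.closure ∅ then 1
  else - ∑ Y ∈ (X.powerset.filter fun Y => M.IsFlat Y ∧ Y ≠ X).attach, M.mu Y.1
termination_by X.card
decreasing_by
  have h := Y.2
  simp only [Finset.mem_filter, Finset.mem_powerset] at h
  exact Finset.card_lt_card (h.1.ssubset_of_ne h.2.2)

/-- The `k`-th Whitney number of the first kind. -/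
def whitney (M : FinMatroid E) (k : ℕ) : ℕ :=
  ∑ X ∈ univ.powerset.filter (fun X => M.IsFlat X ∧ M.rk X = k), (M.mu X).natAbs

end FinMatroid

open Finset in
open Classical in
/-- A finite lattice `L` with rank function `rk` is *geometric* if `rk` is the grading
(zero at the bottom, increasing by one along covers), semimodular, and every element
is the join of the atoms below it. -/
def IsGeometricLattice (L : Type) [Lattice L] [BoundedOrder L] [Fintype L] (rk : L → ℕ) : Prop :=
  rk ⊥ = 0 ∧ (∀ a b : L, a ⋖ b → rk b = rk a + 1) ∧
  (∀ a b : L, rk (a ⊓ b) + rk (a ⊔ b) ≤ rk a + rk b) ∧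
  (∀ a : L, a = (univ.filter fun x => IsAtom x ∧ x ≤ a).sup id)

namespace FinMatroid

/-- A matroid is simple if all sets of size at most one are closed. -/
def Simple {E : Type} [DecidableEq E] [Fintype E] (M : FinMatroid E) : Prop :=
  M.closure ∅ = ∅ ∧ ∀ e : E, M.closure {e} = {e}

end FinMatroid
namespace FinMatroid

variable {E : Type} [DecidableEq E] [Fintype E] (M : FinMatroid E)

lemma rk_empty : M.rk ∅ = 0 := Nat.le_zero.mp (by simpa using M.rk_le_card ∅)

lemma rk_insert_le (e : E) (X : Finset E) : M.rk (insert e X) ≤ M.rk X + 1 := by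
  have h := M.rk_submod X {e}
  have h1 : M.rk {e} ≤ 1 := by simpa using M.rk_le_card {e}
  have h2 : X ∪ {e} = insert e X := by ext x; simp [or_comm]
  have h3 : M.rk (insert e X) ≤ M.rk (X ∪ {e}) + M.rk (X ∩ {e}) := Nat.le_add_right _ _ |>.trans (by rw [h2])
  omega

lemma rk_le_insert (e : E) (X : Finset E) : M.rk X ≤ M.rk (insert e X) :=
  M.rk_mono (Finset.subset_insert e X)

lemma mem_closure {e : E} {X : Finset E} : e ∈ M.closure X ↔ M.rk (insert e X) = M.rk X := by
  simp [closure]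

lemma subset_closure (X : Finset E) : X ⊆ M.closure X := by
  intro e he
  rw [mem_closure, Finset.insert_eq_self.mpr he]

lemma rk_union_eq {X S : Finset E} (hS : S ⊆ M.closure X) : M.rk (X ∪ S) = M.rk X := by
  induction S using Finset.induction_on with
  | empty => simp
  | @insert a S ha ih =>
    have hSX : S ⊆ M.closure X := (Finset.subset_insert a S).trans hS
    have haX : M.rk (insert a X) = M.rk X := by
      rw [← mem_closure]; exact hS (Finset.mem_insert_self a S)
    have h := M.rk_submod (X ∪ S) (insert a X)
    have h1 : (X ∪ S) ∪ insert a X = X ∪ insert a S := by ext x; simp; tauto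
    have h2 : X ⊆ (X ∪ S) ∩ insert a X := by intro x hx; simp [hx]
    have h3 := M.rk_mono h2
    have h4 : M.rk X ≤ M.rk (X ∪ insert a S) := M.rk_mono Finset.subset_union_left
    rw [h1, ih hSX, haX] at h
    omega

lemma rk_closure (X : Finset E) : M.rk (M.closure X) = M.rk X := by
  have h := M.rk_union_eq (le_refl (M.closure X))
  rwa [Finset.union_eq_right.mpr (M.subset_closure X)] at h

lemma closure_mono {X Y : Finset E} (h : X ⊆ Y) : M.closure X ⊆ M.closure Y := by
  intro e he
  rw [mem_closure] at he ⊢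
  have hsub := M.rk_submod (insert e X) Y
  have h1 : insert e X ∪ Y = insert e Y := by
    ext x; simp; tauto
  have h2 : X ⊆ insert e X ∩ Y := fun x hx => by simp [hx, h hx]
  have h3 := M.rk_mono h2
  have h4 := M.rk_le_insert e Y
  rw [h1, he] at hsub
  omega

lemma closure_flat (X : Finset E) : M.IsFlat (M.closure X) := by
  unfold IsFlat
  apply Finset.Subset.antisymm _ (M.subset_closure _)
  intro e he
  rw [mem_closure] at he ⊢
  rw [M.rk_closure] at he
  have h1 : M.rk (insert e X) ≤ M.rk (insert e (M.closure X)) :=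
    M.rk_mono (Finset.insert_subset_insert e (M.subset_closure X))
  have h2 := M.rk_le_insert e X
  omega

lemma closure_subset_flat {X F : Finset E} (hX : X ⊆ F) (hF : M.IsFlat F) :
    M.closure X ⊆ F := by
  have := M.closure_mono hX
  rwa [hF] at this

/-- Cover in the flats implies rank goes up by one. -/
lemma rk_covby {F G : Finset E} (hF : M.IsFlat F) (hG : M.IsFlat G) (hFG : F ⊂ G)
    (hcov : ∀ H, M.IsFlat H → F ⊆ H → H ⊆ G → H = F ∨ H = G) :
    M.rk G = M.rk F + 1 := by
  obtain ⟨e, heG, heF⟩ := Finset.exists_of_ssubset hFG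
  have hins : insert e F ⊆ G := Finset.insert_subset heG hFG.subset
  have hH : M.closure (insert e F) ⊆ G := M.closure_subset_flat hins hG
  have hFH : F ⊆ M.closure (insert e F) :=
    (Finset.subset_insert e F).trans (M.subset_closure _)
  have hne : M.closure (insert e F) ≠ F := fun h => heF (h ▸ M.subset_closure _ (Finset.mem_insert_self e F))
  have := hcov _ (M.closure_flat _) hFH hH
  have hG' : M.closure (insert e F) = G := (this.resolve_left hne)
  have hrk : M.rk (insert e F) ≠ M.rk F := by
    intro h
    have : e ∈ M.closure F := M.mem_closure.mpr h
    rw [hF] at this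
    exact heF this
  have h1 := M.rk_insert_le e F
  have h2 := M.rk_le_insert e F
  have h3 : M.rk G = M.rk (insert e F) := by rw [← hG', M.rk_closure]
  omega

end FinMatroid
namespace FinMatroid

variable {E : Type} [DecidableEq E] [Fintype E] (M : FinMatroid E)

lemma empty_flat_inter {F G : Finset E} (hF : M.IsFlat F) (hG : M.IsFlat G) :
    M.IsFlat (F ∩ G) := by
  refine Finset.Subset.antisymm ?_ (M.subset_closure _)
  intro e he
  have h1 : e ∈ F := M.closure_subset_flat Finset.inter_subset_left hF he
  have h2 : e ∈ G := M.closure_subset_flat Finset.inter_subset_right hG he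
  exact Finset.mem_inter.mpr ⟨h1, h2⟩

lemma rk_singleton_of_not_mem {e : E} (he : e ∉ M.closure ∅) : M.rk {e} = 1 := by
  have h1 : M.rk {e} ≤ 1 := by simpa using M.rk_le_card {e}
  have h2 : M.rk {e} ≠ M.rk ∅ := by
    rw [mem_closure] at he; simpa using he
  have := M.rk_empty
  omega

/-- A flat inside the closure of a point is either the bottom flat or the whole closure. -/
lemma flat_in_point_closure {H : Finset E} {e : E} (hH : M.IsFlat H)
    (hsub : H ⊆ M.closure {e}) (he : e ∉ M.closure ∅) :
    H = M.closure ∅ ∨ H = M.closure {e} := by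
  by_cases hbot : H = M.closure ∅
  · exact Or.inl hbot
  right
  have hbotH : M.closure ∅ ⊆ H := M.closure_subset_flat (Finset.empty_subset H) hH
  obtain ⟨f, hfH, hfbot⟩ : ∃ f ∈ H, f ∉ M.closure ∅ := by
    by_contra h
    push_neg at h
    exact hbot (Finset.Subset.antisymm h hbotH)
  have hrkf : M.rk {f} = 1 := M.rk_singleton_of_not_mem hfbot
  have hrke : M.rk {e} = 1 := M.rk_singleton_of_not_mem he
  have hH1 : M.rk H = 1 := by
    have hle : M.rk H ≤ 1 := by
      have := M.rk_mono hsub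
      rwa [M.rk_closure, hrke] at this
    have hge : 1 ≤ M.rk H := hrkf ▸ M.rk_mono (Finset.singleton_subset_iff.mpr hfH)
    omega
  have heH : e ∈ H := by
    rw [← hH, mem_closure]
    have hsub2 : insert e H ⊆ M.closure {e} :=
      Finset.insert_subset (M.subset_closure {e} (Finset.mem_singleton_self e)) hsub
    have h1 : M.rk (insert e H) ≤ 1 := by
      have := M.rk_mono hsub2
      rwa [M.rk_closure, hrke] at this
    have h2 := M.rk_le_insert e H
    omega
  have := M.closure_subset_flat (Finset.singleton_subset_iff.mpr heH) hH
  exact Finset.Subset.antisymm hsub this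

lemma simple_singleton_flat {M : FinMatroid E} (hM : M.Simple) (e : E) : M.IsFlat {e} := hM.2 e

lemma simple_bot_flat {M : FinMatroid E} (hM : M.Simple) : M.IsFlat (∅ : Finset E) := hM.1

lemma simple_rk_singleton {M : FinMatroid E} (hM : M.Simple) (e : E) : M.rk {e} = 1 :=
  M.rk_singleton_of_not_mem (by rw [hM.1]; exact Finset.notMem_empty e)

/-- In a simple matroid, rank-one flats are singletons. -/
lemma simple_flat_rk_one {M : FinMatroid E} (hM : M.Simple) {F : Finset E}
    (hF : M.IsFlat F) (hrk : M.rk F = 1) : ∃ e, F = {e} := by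
  obtain ⟨e, heF⟩ : F.Nonempty := by
    rcases Finset.eq_empty_or_nonempty F with rfl | h
    · rw [M.rk_empty] at hrk; omega
    · exact h
  refine ⟨e, Finset.Subset.antisymm (fun f hf => ?_) (Finset.singleton_subset_iff.mpr heF)⟩
  have hef : M.rk (insert f {e}) = M.rk {e} := by
    have h1 : insert f {e} ⊆ F := Finset.insert_subset hf (Finset.singleton_subset_iff.mpr heF)
    have h2 := M.rk_mono h1
    have h3 := M.rk_le_insert f {e}
    have h4 := simple_rk_singleton hM e
    omega
  have : f ∈ M.closure {e} := M.mem_closure.mpr hef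
  rwa [hM.2 e] at this

end FinMatroid
section Geo
set_option linter.unusedSectionVars false

variable {L : Type} [Lattice L] [BoundedOrder L] [Fintype L] {rk : L → ℕ}

lemma exists_covby_le {a b : L} (hab : a < b) : ∃ c, a ⋖ c ∧ c ≤ b := by
  classical
  have hne : (Finset.univ.filter fun x => a < x ∧ x ≤ b).Nonempty :=
    ⟨b, by simp [hab]⟩
  obtain ⟨c, hc, hmin⟩ := Finset.exists_minimal hne
  simp only [Finset.mem_filter, Finset.mem_univ, true_and] at hc
  refine ⟨c, ⟨hc.1, fun y hy hyc => ?_⟩, hc.2⟩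
  exact lt_irrefl _ (hyc.trans_le (hmin (by simp [hy, hyc.le.trans hc.2]) hyc.le))

lemma geo_rk_lt (hgeo : IsGeometricLattice L rk) : ∀ a b : L, a < b → rk a < rk b := by
  classical
  suffices h : ∀ n (a b : L), (Finset.univ.filter (a < ·)).card ≤ n → a < b → rk a < rk b by
    intro a b hab; exact h _ a b le_rfl hab
  intro n
  induction n with
  | zero =>
    intro a b hcard hab
    have hb : b ∈ Finset.univ.filter (a < ·) := by simp [hab]
    have := Finset.card_pos.mpr ⟨b, hb⟩
    omega
  | succ n ih =>
    intro a b hcard hab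
    obtain ⟨c, hac, hcb⟩ := exists_covby_le hab
    have hrc : rk c = rk a + 1 := hgeo.2.1 a c hac
    rcases eq_or_lt_of_le hcb with rfl | hlt
    · omega
    · have hsub : (Finset.univ.filter (c < ·)) ⊂ (Finset.univ.filter (a < ·)) := by
        refine Finset.ssubset_iff_of_subset (fun x hx => ?_) |>.mpr ⟨c, by simp [hac.lt], by simp⟩
        simp only [Finset.mem_filter, Finset.mem_univ, true_and] at hx ⊢
        exact hac.lt.trans hx
      have := Finset.card_lt_card hsub
      have := ih c b (by omega) hlt
      omega

lemma geo_rk_mono (hgeo : IsGeometricLattice L rk) {a b : L} (hab : a ≤ b) : rk a ≤ rk b := by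
  rcases eq_or_lt_of_le hab with rfl | h
  · exact le_rfl
  · exact (geo_rk_lt hgeo a b h).le

lemma geo_rk_atom (hgeo : IsGeometricLattice L rk) {a : L} (ha : IsAtom a) : rk a = 1 := by
  have := hgeo.2.1 ⊥ a ha.bot_covBy
  rw [this, hgeo.1]

end Geo
section Forward
set_option linter.unusedSectionVars false

open Classical

variable {L : Type} [Lattice L] [BoundedOrder L] [Fintype L]

/-- The matroid on the atoms of a geometric lattice. -/
noncomputable def geoMatroid (rk : L → ℕ) (hgeo : IsGeometricLattice L rk) :
    FinMatroid {x : L // IsAtom x} where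
  rk X := rk (X.sup (·.1))
  rk_le_card X := by
    induction X using Finset.induction_on with
    | empty => simp [hgeo.1]
    | @insert a X ha ih =>
      show rk ((insert a X).sup (·.1)) ≤ _
      rw [Finset.sup_insert, Finset.card_insert_of_notMem ha]
      have h := hgeo.2.2.1 a.1 (X.sup (·.1))
      have h2 := geo_rk_atom hgeo a.2
      have ih' : rk (X.sup (·.1)) ≤ X.card := ih
      omega
  rk_mono X Y h := geo_rk_mono hgeo (Finset.sup_mono h)
  rk_submod X Y := by
    have h1 : (X ∪ Y).sup (·.1) = X.sup (·.1) ⊔ Y.sup (·.1) := Finset.sup_union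
    have h2 : (X ∩ Y).sup (·.1) ≤ X.sup (·.1) ⊓ Y.sup (·.1) :=
      le_inf (Finset.sup_mono Finset.inter_subset_left) (Finset.sup_mono Finset.inter_subset_right)
    have h3 := geo_rk_mono hgeo h2
    have h4 := hgeo.2.2.1 (X.sup (·.1)) (Y.sup (·.1))
    show rk ((X ∪ Y).sup (·.1)) + rk ((X ∩ Y).sup (·.1)) ≤ rk (X.sup (·.1)) + rk (Y.sup (·.1))
    rw [h1]
    omega

lemma geoMatroid_closure (rk : L → ℕ) (hgeo : IsGeometricLattice L rk) (X : Finset {x : L // IsAtom x}) :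
    (geoMatroid rk hgeo).closure X = Finset.univ.filter fun e => e.1 ≤ X.sup (·.1) := by
  ext e
  simp only [FinMatroid.closure, Finset.mem_filter, Finset.mem_univ, true_and]
  show rk ((insert e X).sup (·.1)) = rk (X.sup (·.1)) ↔ _
  rw [Finset.sup_insert]
  constructor
  · intro h
    by_contra hle
    have hlt : X.sup (·.1) < e.1 ⊔ X.sup (·.1) :=
      lt_of_le_of_ne le_sup_right (fun hh => hle (hh ▸ le_sup_left))
    exact absurd h.symm (Nat.ne_of_gt (geo_rk_lt hgeo _ _ hlt)).symm
  · intro h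
    rw [sup_eq_right.mpr h]

lemma geo_atomSup (rk : L → ℕ) (hgeo : IsGeometricLattice L rk) (a : L) :
    (Finset.univ.filter fun x : {x : L // IsAtom x} => x.1 ≤ a).sup (·.1) = a := by
  apply le_antisymm
  · exact Finset.sup_le fun x hx => (Finset.mem_filter.mp hx).2
  · conv_lhs => rw [hgeo.2.2.2 a]
    apply Finset.sup_le
    intro y hy
    simp only [Finset.mem_filter, Finset.mem_univ, true_and] at hy
    exact Finset.le_sup (f := fun x : {x : L // IsAtom x} => x.1)
      (by simp only [Finset.mem_filter, Finset.mem_univ, true_and]; exact hy.2 : (⟨y, hy.1⟩ : {x : L // IsAtom x}) ∈ _)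

noncomputable def geoIso (rk : L → ℕ) (hgeo : IsGeometricLattice L rk) :
    L ≃o {X : Finset {x : L // IsAtom x} // (geoMatroid rk hgeo).IsFlat X} where
  toFun a := ⟨Finset.univ.filter fun x => x.1 ≤ a, by
    show (geoMatroid rk hgeo).closure _ = _
    rw [geoMatroid_closure rk hgeo, geo_atomSup rk hgeo]⟩
  invFun F := F.1.sup (·.1)
  left_inv := fun a => by exact geo_atomSup rk hgeo a
  right_inv F := by
    have h := F.2
    rw [FinMatroid.IsFlat, geoMatroid_closure] at h
    exact Subtype.ext h
  map_rel_iff' {a b} := by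
    constructor
    · intro h
      have h' : (Finset.univ.filter fun x : {x : L // IsAtom x} => x.1 ≤ a) ⊆
          Finset.univ.filter fun x => x.1 ≤ b := h
      calc a = _ := (geo_atomSup rk hgeo a).symm
        _ ≤ _ := Finset.sup_mono h'
        _ = b := geo_atomSup rk hgeo b
    · intro h
      show (Finset.univ.filter fun x : {x : L // IsAtom x} => x.1 ≤ a) ≤
          Finset.univ.filter fun x => x.1 ≤ b
      refine Finset.le_iff_subset.mpr fun x hx => ?_
      simp only [Finset.mem_filter, Finset.mem_univ, true_and] at hx ⊢
      exact hx.trans h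

end Forward
section Backward
set_option linter.unusedSectionVars false

open FinMatroid

variable {E : Type} [DecidableEq E] [Fintype E] {M : FinMatroid E}
variable {L : Type} [Lattice L] [BoundedOrder L] [Fintype L]

lemma flatLE {F G : {X : Finset E // M.IsFlat X}} : F ≤ G ↔ F.1 ⊆ G.1 := Iff.rfl

lemma flatLT {F G : {X : Finset E // M.IsFlat X}} : F < G ↔ F.1 ⊂ G.1 := Iff.rfl

lemma flat_covBy_rk {F G : {X : Finset E // M.IsFlat X}} (h : F ⋖ G) :
    M.rk G.1 = M.rk F.1 + 1 := by
  refine M.rk_covby F.2 G.2 (flatLT.mp h.lt) (fun H hH hFH hHG => ?_)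
  rcases eq_or_lt_of_le (flatLE.mpr hFH : F ≤ ⟨H, hH⟩) with heq | hlt
  · exact Or.inl (congrArg Subtype.val heq).symm
  · rcases eq_or_lt_of_le (flatLE.mpr hHG : (⟨H, hH⟩ : {X // M.IsFlat X}) ≤ G) with heq | hlt2
    · exact Or.inr (congrArg Subtype.val heq)
    · exact absurd hlt2 (h.2 hlt)

lemma iso_bot (iso : L ≃o {X : Finset E // M.IsFlat X}) :
    (iso ⊥).1 = M.closure ∅ := by
  apply Finset.Subset.antisymm
  · have h : iso ⊥ ≤ ⟨M.closure ∅, M.closure_flat ∅⟩ := by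
      rw [← iso.apply_symm_apply (⟨M.closure ∅, M.closure_flat ∅⟩ : {X : Finset E // M.IsFlat X})]
      exact iso.monotone bot_le
    exact flatLE.mp h
  · exact M.closure_subset_flat (Finset.empty_subset _) (iso ⊥).2

lemma iso_inf (iso : L ≃o {X : Finset E // M.IsFlat X}) (a b : L) :
    (iso (a ⊓ b)).1 = (iso a).1 ∩ (iso b).1 := by
  apply Finset.Subset.antisymm
  · exact Finset.subset_inter (flatLE.mp (iso.monotone inf_le_left))
      (flatLE.mp (iso.monotone inf_le_right))
  · set K : {X : Finset E // M.IsFlat X} :=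
      ⟨(iso a).1 ∩ (iso b).1, M.empty_flat_inter (iso a).2 (iso b).2⟩
    have hKa : iso.symm K ≤ a := by
      rw [← iso.le_iff_le, iso.apply_symm_apply]
      exact flatLE.mpr Finset.inter_subset_left
    have hKb : iso.symm K ≤ b := by
      rw [← iso.le_iff_le, iso.apply_symm_apply]
      exact flatLE.mpr Finset.inter_subset_right
    have : iso.symm K ≤ a ⊓ b := le_inf hKa hKb
    have h2 := iso.monotone this
    rw [iso.apply_symm_apply] at h2
    exact flatLE.mp h2

lemma iso_sup (iso : L ≃o {X : Finset E // M.IsFlat X}) (a b : L) :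
    (iso (a ⊔ b)).1 = M.closure ((iso a).1 ∪ (iso b).1) := by
  apply Finset.Subset.antisymm
  · set J : {X : Finset E // M.IsFlat X} :=
      ⟨M.closure ((iso a).1 ∪ (iso b).1), M.closure_flat _⟩
    have hJa : a ≤ iso.symm J := by
      rw [← iso.le_iff_le, iso.apply_symm_apply]
      exact flatLE.mpr (Finset.subset_union_left.trans (M.subset_closure _))
    have hJb : b ≤ iso.symm J := by
      rw [← iso.le_iff_le, iso.apply_symm_apply]
      exact flatLE.mpr (Finset.subset_union_right.trans (M.subset_closure _))
    have h2 := iso.monotone (sup_le hJa hJb)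
    rw [iso.apply_symm_apply] at h2
    exact flatLE.mp h2
  · refine M.closure_subset_flat (Finset.union_subset ?_ ?_) (iso (a ⊔ b)).2
    · exact flatLE.mp (iso.monotone le_sup_left)
    · exact flatLE.mp (iso.monotone le_sup_right)

lemma geo_atomistic (iso : L ≃o {X : Finset E // M.IsFlat X}) (a : L) {S : Finset L}
    (hSmem : ∀ x, x ∈ S ↔ IsAtom x ∧ x ≤ a) : a = S.sup id := by
    have hsup_le : S.sup id ≤ a := by
      refine Finset.sup_le fun x hx => ?_
      exact ((hSmem x).mp hx).2
    refine le_antisymm ?_ hsup_le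
    rw [← iso.le_iff_le]
    refine flatLE.mpr fun e he => ?_
    by_cases hbot : e ∈ M.closure ∅
    · exact M.closure_subset_flat (Finset.empty_subset _) (iso (S.sup id)).2 hbot
    · set x := iso.symm ⟨M.closure {e}, M.closure_flat _⟩ with hx
      have hisx : (iso x).1 = M.closure {e} := by rw [hx, iso.apply_symm_apply]
      have hxa : x ≤ a := by
        rw [hx, ← iso.le_iff_le, iso.apply_symm_apply]
        exact flatLE.mpr (M.closure_subset_flat (Finset.singleton_subset_iff.mpr he) (iso a).2)
      have hatom : IsAtom x := by
        constructor
        · intro hxbot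
          have : M.closure {e} = M.closure ∅ := by
            rw [← hisx, hxbot, iso_bot iso]
          exact hbot (this ▸ M.subset_closure {e} (Finset.mem_singleton_self e))
        · intro y hy
          have hsub : (iso y).1 ⊆ M.closure {e} := hisx ▸ flatLE.mp (iso.monotone hy.le)
          rcases M.flat_in_point_closure (iso y).2 hsub hbot with h | h
          · apply iso.injective
            apply Subtype.ext
            rw [h, iso_bot iso]
          · exfalso
            apply hy.ne
            apply iso.injective
            apply Subtype.ext
            rw [h, hisx]
      have hxS : x ∈ S := (hSmem x).mpr ⟨hatom, hxa⟩
      have hxb : x ≤ S.sup id := Finset.le_sup (f := id) hxS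
      have : (iso x).1 ⊆ (iso (S.sup id)).1 := flatLE.mp (iso.monotone hxb)
      exact this (hisx ▸ M.subset_closure {e} (Finset.mem_singleton_self e))

lemma flats_geometric [DecidableEq L] (iso : L ≃o {X : Finset E // M.IsFlat X}) :
    IsGeometricLattice L (fun l => M.rk (iso l).1) := by
  refine ⟨?_, ?_, ?_, ?_⟩
  · show M.rk (iso ⊥).1 = 0
    rw [iso_bot iso, M.rk_closure, M.rk_empty]
  · intro a b hab
    exact flat_covBy_rk ((apply_covBy_apply_iff iso).mpr hab)
  · intro a b
    show M.rk (iso (a ⊓ b)).1 + M.rk (iso (a ⊔ b)).1 ≤ M.rk (iso a).1 + M.rk (iso b).1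
    rw [iso_inf iso, iso_sup iso, M.rk_closure]
    have := M.rk_submod (iso a).1 (iso b).1
    omega
  · intro a
    apply geo_atomistic iso a
    intro x
    simp

end Backward
section Unique
set_option linter.unusedSectionVars false

open FinMatroid

variable {E₁ E₂ : Type} [DecidableEq E₁] [Fintype E₁] [DecidableEq E₂] [Fintype E₂]
  {M₁ : FinMatroid E₁} {M₂ : FinMatroid E₂}

lemma psi_bot (h₁ : M₁.Simple) (h₂ : M₂.Simple)
    (ψ : {X : Finset E₁ // M₁.IsFlat X} ≃o {X : Finset E₂ // M₂.IsFlat X}) :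
    (ψ ⟨∅, simple_bot_flat h₁⟩).1 = ∅ := by
  have h : ψ ⟨∅, simple_bot_flat h₁⟩ ≤ ⟨∅, simple_bot_flat h₂⟩ := by
    rw [← ψ.apply_symm_apply (⟨∅, simple_bot_flat h₂⟩ : {X : Finset E₂ // M₂.IsFlat X})]
    exact ψ.monotone (flatLE.mpr (Finset.empty_subset _))
  exact Finset.subset_empty.mp (flatLE.mp h)

lemma psi_rk (h₁ : M₁.Simple) (h₂ : M₂.Simple)
    (ψ : {X : Finset E₁ // M₁.IsFlat X} ≃o {X : Finset E₂ // M₂.IsFlat X})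
    (F : {X : Finset E₁ // M₁.IsFlat X}) : M₂.rk (ψ F).1 = M₁.rk F.1 := by
  suffices h : ∀ n (F : {X : Finset E₁ // M₁.IsFlat X}), F.1.card ≤ n →
      M₂.rk (ψ F).1 = M₁.rk F.1 from h F.1.card F le_rfl
  intro n
  induction n with
  | zero =>
    intro F hcard
    have hF : F = ⟨∅, simple_bot_flat h₁⟩ := Subtype.ext (Finset.card_eq_zero.mp (Nat.le_zero.mp hcard))
    rw [hF, psi_bot h₁ h₂ ψ]
    simp [M₁.rk_empty, M₂.rk_empty]
  | succ n ih =>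
    intro F hcard
    by_cases hFbot : F.1 = ∅
    · have hF : F = ⟨∅, simple_bot_flat h₁⟩ := Subtype.ext hFbot
      rw [hF, psi_bot h₁ h₂ ψ]
      simp [M₁.rk_empty, M₂.rk_empty]
    · have hne : (F.1.powerset.filter fun H => M₁.IsFlat H ∧ H ≠ F.1).Nonempty := by
        refine ⟨∅, ?_⟩
        simp only [Finset.mem_filter, Finset.mem_powerset]
        exact ⟨Finset.empty_subset _, simple_bot_flat h₁, fun h => hFbot h.symm⟩
      obtain ⟨H, hH, hmax⟩ := Finset.exists_maximal hne
      simp only [Finset.mem_filter, Finset.mem_powerset] at hH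
      obtain ⟨hHsub, hHflat, hHne⟩ := hH
      have hHF : H ⊂ F.1 := Finset.ssubset_iff_subset_ne.mpr ⟨hHsub, hHne⟩
      have hcov : (⟨H, hHflat⟩ : {X : Finset E₁ // M₁.IsFlat X}) ⋖ F := by
        refine ⟨flatLT.mpr hHF, fun K hK1 hK2 => ?_⟩
        have hKF : K.1 ⊂ F.1 := flatLT.mp hK2
        refine not_subset_of_ssubset (flatLT.mp hK1) (hmax ?_ (flatLT.mp hK1).subset)
        simp only [Finset.mem_filter, Finset.mem_powerset]
        exact ⟨hKF.subset, K.2, hKF.ne⟩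
      have hrk1 : M₁.rk F.1 = M₁.rk H + 1 := flat_covBy_rk hcov
      have hcov2 : ψ ⟨H, hHflat⟩ ⋖ ψ F := (apply_covBy_apply_iff ψ).mpr hcov
      have hrk2 : M₂.rk (ψ F).1 = M₂.rk (ψ ⟨H, hHflat⟩).1 + 1 := flat_covBy_rk hcov2
      have hcardH : H.card ≤ n := by
        have := Finset.card_lt_card hHF
        omega
      rw [hrk2, ih ⟨H, hHflat⟩ hcardH, hrk1]

lemma unique_of_iso (h₁ : M₁.Simple) (h₂ : M₂.Simple)
    (ψ : {X : Finset E₁ // M₁.IsFlat X} ≃o {X : Finset E₂ // M₂.IsFlat X}) :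
    ∃ e : E₁ ≃ E₂, ∀ X : Finset E₁, M₂.rk (X.image e) = M₁.rk X := by
  have hf : ∀ x : E₁, ∃ y : E₂, (ψ ⟨{x}, simple_singleton_flat h₁ x⟩).1 = {y} := by
    intro x
    apply simple_flat_rk_one h₂ (ψ _).2
    rw [psi_rk h₁ h₂ ψ]
    exact simple_rk_singleton h₁ x
  have hg : ∀ y : E₂, ∃ x : E₁, (ψ.symm ⟨{y}, simple_singleton_flat h₂ y⟩).1 = {x} := by
    intro y
    apply simple_flat_rk_one h₁ (ψ.symm _).2
    rw [psi_rk h₂ h₁ ψ.symm]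
    exact simple_rk_singleton h₂ y
  choose f hfspec using hf
  choose g hgspec using hg
  have hgf : ∀ x, g (f x) = x := by
    intro x
    have h1 : (⟨{f x}, simple_singleton_flat h₂ (f x)⟩ : {X : Finset E₂ // M₂.IsFlat X}) =
        ψ ⟨{x}, simple_singleton_flat h₁ x⟩ := Subtype.ext (hfspec x).symm
    have h2 := hgspec (f x)
    rw [h1, ψ.symm_apply_apply] at h2
    exact Finset.singleton_injective h2.symm
  have hfg : ∀ y, f (g y) = y := by
    intro y
    have h1 : (⟨{g y}, simple_singleton_flat h₁ (g y)⟩ : {X : Finset E₁ // M₁.IsFlat X}) =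
        ψ.symm ⟨{y}, simple_singleton_flat h₂ y⟩ := Subtype.ext (hgspec y).symm
    have h2 := hfspec (g y)
    rw [h1, ψ.apply_symm_apply] at h2
    exact Finset.singleton_injective h2.symm
  refine ⟨⟨f, g, hgf, hfg⟩, fun X => ?_⟩
  show M₂.rk (X.image f) = M₁.rk X
  have hcl : M₂.closure (X.image f) = (ψ ⟨M₁.closure X, M₁.closure_flat X⟩).1 := by
    apply Finset.Subset.antisymm
    · refine M₂.closure_subset_flat ?_ (ψ _).2
      intro y hy
      obtain ⟨x, hx, rfl⟩ := Finset.mem_image.mp hy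
      have hle : ψ ⟨{x}, simple_singleton_flat h₁ x⟩ ≤ ψ ⟨M₁.closure X, M₁.closure_flat X⟩ :=
        ψ.monotone (flatLE.mpr (Finset.singleton_subset_iff.mpr (M₁.subset_closure X hx)))
      exact flatLE.mp hle (by rw [hfspec x]; exact Finset.mem_singleton_self _)
    · have hW : (⟨M₁.closure X, M₁.closure_flat X⟩ : {X : Finset E₁ // M₁.IsFlat X}) ≤
          ψ.symm ⟨M₂.closure (X.image f), M₂.closure_flat _⟩ := by
        refine flatLE.mpr (M₁.closure_subset_flat ?_ (ψ.symm _).2)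
        intro x hx
        have hle : ψ ⟨{x}, simple_singleton_flat h₁ x⟩ ≤
            ⟨M₂.closure (X.image f), M₂.closure_flat _⟩ := by
          refine flatLE.mpr ?_
          rw [hfspec x]
          exact Finset.singleton_subset_iff.mpr
            (M₂.subset_closure _ (Finset.mem_image_of_mem f hx))
        have := ψ.symm.monotone hle
        rw [ψ.symm_apply_apply] at this
        exact flatLE.mp this (Finset.mem_singleton_self x)
      have := ψ.monotone hW
      rw [ψ.apply_symm_apply] at this
      exact flatLE.mp this
  calc M₂.rk (X.image f) = M₂.rk (M₂.closure (X.image f)) := (M₂.rk_closure _).symm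
    _ = M₂.rk (ψ ⟨M₁.closure X, M₁.closure_flat X⟩).1 := by rw [hcl]
    _ = M₁.rk (M₁.closure X) := psi_rk h₁ h₂ ψ _
    _ = M₁.rk X := M₁.rk_closure X

end Unique

/-- a finite lattice is geometric iff it is isomorphic to the lattice of
flats of some matroid; moreover the simple matroid realizing a given lattice is unique
up to isomorphism. -/
theorem stmt_16 (L : Type) [Lattice L] [BoundedOrder L] [Fintype L] [DecidableEq L] :
    ((∃ rk : L → ℕ, IsGeometricLattice L rk) ↔
      ∃ (E : Type) (_ : DecidableEq E) (_ : Fintype E) (M : FinMatroid E),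
        Nonempty (L ≃o {X : Finset E // M.IsFlat X})) ∧
    (∀ (E₁ E₂ : Type) (_ : DecidableEq E₁) (_ : Fintype E₁)
        (_ : DecidableEq E₂) (_ : Fintype E₂)
        (M₁ : FinMatroid E₁) (M₂ : FinMatroid E₂),
        M₁.Simple → M₂.Simple →
        Nonempty (L ≃o {X : Finset E₁ // M₁.IsFlat X}) →
        Nonempty (L ≃o {X : Finset E₂ // M₂.IsFlat X}) →
        ∃ e : E₁ ≃ E₂, ∀ X : Finset E₁, M₂.rk (X.image e) = M₁.rk X) := by
  constructor
  · constructor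
    · rintro ⟨rk, hgeo⟩
      exact ⟨{x : L // IsAtom x}, _, _, geoMatroid rk hgeo, ⟨geoIso rk hgeo⟩⟩
    · rintro ⟨E, dE, fE, M, ⟨iso⟩⟩
      exact ⟨_, flats_geometric iso⟩
  · rintro E₁ E₂ d₁ f₁ d₂ f₂ M₁ M₂ h₁ h₂ ⟨iso₁⟩ ⟨iso₂⟩
    exact unique_of_iso h₁ h₂ (iso₁.symm.trans iso₂)
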